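/- Let K be a field and q ∈ K an element that is not a root of unity. In the quantum plane B = B(q), consider the left ideals I = B(ab−1)(a−1) ⊆ J = B(a−1). Then V = J/I is a simple left B-module. -/

import Mathlib

/-!
Right multiplication by `a - 1` maps `B` onto `J` and `B(ab - 1)` onto `I`, and it is injective:
the grading `a ↦ a X`, `b ↦ b` into `B[X]` sends `a - 1` to `a X - 1`, which is not a right zero
divisor. Hence `V ≅ B ⧸ B(ab - 1)`.

To see that `B(ab - 1)` is a maximal left ideal, let `B` act on `K[ℤ] = ⨁ K e_d` with `a` lowering
and `b` raising the index, so that `ab` acts on `e_d` by `q ^ d`. The kernel of `x ↦ x • e_0` is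
exactly `B(ab - 1)`: modulo `B(ab - 1)` every monomial `b^i a^j` is a multiple of `b^(i-j)` or
`a^(j-i)`, and these are sent to nonzero multiples of distinct `e_d`. Since `q` is not a root of
unity the eigenvalues `q ^ d` are distinct, so the operators `ab - q ^ d` cut any nonzero vector
down to a single `e_d`, which a power of `a` or `b` moves to `e_0`.
-/

noncomputable section

open FreeAlgebra

/-- Defining relation of the quantum plane `B(q)`: `a * b = q • (b * a)`, where
`ι K 0` plays the role of `a` and `ι K 1` plays the role of `b`. -/
inductive QuantumPlaneRel (K : Type) [Field K] (q : K) :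
    FreeAlgebra K (Fin 2) → FreeAlgebra K (Fin 2) → Prop
  | rel : QuantumPlaneRel K q (ι K (0 : Fin 2) * ι K (1 : Fin 2))
      (q • (ι K (1 : Fin 2) * ι K (0 : Fin 2)))

/-- The coordinate algebra of the quantum plane `B(q)`. -/
abbrev QuantumPlane (K : Type) [Field K] (q : K) : Type :=
  RingQuot (QuantumPlaneRel K q)

/-- The generator `a` of the quantum plane. -/
def QuantumPlane.a (K : Type) [Field K] (q : K) : QuantumPlane K q :=
  RingQuot.mkAlgHom K (QuantumPlaneRel K q) (ι K (0 : Fin 2))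

/-- The generator `b` of the quantum plane. -/
def QuantumPlane.b (K : Type) [Field K] (q : K) : QuantumPlane K q :=
  RingQuot.mkAlgHom K (QuantumPlaneRel K q) (ι K (1 : Fin 2))

open Polynomial

theorem zpow_injective_of_pow_ne_one {G₀ : Type*} [GroupWithZero G₀] {x : G₀} (hx0 : x ≠ 0)
    (hx : ∀ k : ℕ, 0 < k → x ^ k ≠ 1) : Function.Injective (x ^ · : ℤ → G₀) := by
  have hu : Function.Injective (Units.mk0 x hx0 ^ · : ℤ → G₀ˣ) := by
    refine injective_zpow_iff_not_isOfFinOrder.2 fun h => ?_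
    obtain ⟨k, hk, hk1⟩ := isOfFinOrder_iff_pow_eq_one.1 h
    exact hx k hk (by simpa [Units.ext_iff] using hk1)
  exact fun m n h => hu (Units.ext (by simpa using h))

theorem Polynomial.isRightRegular_C_mul_X_sub_one {R : Type*} [Ring R] (r : R) :
    IsRightRegular (C r * X - 1 : R[X]) := by
  refine isRightRegular_iff_left_eq_zero_of_mul.2 fun p hp => Polynomial.ext fun n => ?_
  induction n with
  | zero => simpa [mul_sub, ← mul_assoc] using congrArg (coeff · 0) hp
  | succ n ih =>
    have hn := congrArg (coeff · (n + 1)) hp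
    simp only [mul_sub, mul_one, ← mul_assoc, coeff_sub, coeff_mul_X, coeff_mul_C, ih] at hn
    simpa using hn

def Polynomial.evalOneAlgHom (R A : Type*) [CommSemiring R] [Semiring A] [Algebra R A] :
    A[X] →ₐ[R] A :=
  { eval₂RingHom' (RingHom.id A) 1 fun _ => Commute.one_right _ with
    commutes' := fun r => by simp [algebraMap_apply] }

theorem Ideal.mul_mem_span_singleton_mul_iff {R : Type*} [Ring R] {r : R} (hr : IsRightRegular r)
    (s x : R) : x * r ∈ Ideal.span {s * r} ↔ x ∈ Ideal.span {s} := by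
  simp only [Ideal.mem_span_singleton']
  constructor
  · rintro ⟨y, hy⟩
    exact ⟨y, hr (by simpa only [mul_assoc] using hy)⟩
  · rintro ⟨y, rfl⟩
    exact ⟨y, (mul_assoc y s r).symm⟩

/-- Induced by `x ↦ x * r`. -/
def Ideal.mapMkQSpanSingletonEquiv {R : Type*} [Ring R] {r : R} (hr : IsRightRegular r) (s : R) :
    Submodule.map (Ideal.span {s * r}).mkQ (Ideal.span {r}) ≃ₗ[R] R ⧸ Ideal.span {s} :=
  let Θ := (Ideal.span {s * r}).mkQ ∘ₗ LinearMap.toSpanSingleton R R r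
  have hrange : LinearMap.range Θ = Submodule.map (Ideal.span {s * r}).mkQ (Ideal.span {r}) := by
    rw [LinearMap.range_comp, ← LinearMap.span_singleton_eq_range]
  have hker : LinearMap.ker Θ = Ideal.span {s} := by
    ext x
    simp [Θ, Submodule.Quotient.mk_eq_zero, mul_mem_span_singleton_mul_iff hr]
  (LinearEquiv.ofEq _ _ hrange.symm).trans
    ((LinearMap.quotKerEquivRange Θ).symm.trans (Submodule.quotEquivOfEq _ _ hker))

namespace QuantumPlane

variable {K : Type} [Field K] {q : K}

theorem a_mul_b : a K q * b K q = q • (b K q * a K q) := by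
  simpa only [a, b, map_mul, map_smul] using
    RingQuot.mkAlgHom_rel K (QuantumPlaneRel.rel (K := K) (q := q))

section lift

variable {A : Type*} [Semiring A] [Algebra K A]

def lift (x y : A) (h : x * y = q • (y * x)) : QuantumPlane K q →ₐ[K] A :=
  RingQuot.liftAlgHom K ⟨FreeAlgebra.lift K ![x, y], by
    rintro _ _ ⟨⟩
    simp only [map_mul, map_smul, FreeAlgebra.lift_ι_apply]
    exact h⟩

@[simp]
theorem lift_a (x y : A) (h : x * y = q • (y * x)) : lift x y h (a K q) = x := by
  simp [lift, a]

@[simp]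
theorem lift_b (x y : A) (h : x * y = q • (y * x)) : lift x y h (b K q) = y := by
  simp [lift, b]

theorem algHom_ext {f g : QuantumPlane K q →ₐ[K] A} (ha : f (a K q) = g (a K q))
    (hb : f (b K q) = g (b K q)) : f = g :=
  RingQuot.ringQuot_ext' _ _ _ <| FreeAlgebra.hom_ext <| funext <| Fin.forall_fin_two.2 ⟨ha, hb⟩

end lift

theorem adjoin_a_b : Algebra.adjoin K {a K q, b K q} = ⊤ := by
  have : ({a K q, b K q} : Set (QuantumPlane K q)) =
      RingQuot.mkAlgHom K (QuantumPlaneRel K q) '' Set.range (FreeAlgebra.ι K) := by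
    ext; simp [Fin.exists_fin_two, a, b, eq_comm]
  rw [this, ← AlgHom.map_adjoin, FreeAlgebra.adjoin_range_ι, Algebra.map_top,
    AlgHom.range_eq_top]
  exact RingQuot.mkAlgHom_surjective K _

theorem pow_a_mul_b (n : ℕ) : a K q ^ n * b K q = q ^ n • (b K q * a K q ^ n) := by
  induction n with
  | zero => simp
  | succ n ih =>
    rw [pow_succ, mul_assoc, a_mul_b, mul_smul_comm, ← mul_assoc, ih, smul_mul_assoc,
      mul_assoc, smul_smul, ← pow_succ', pow_succ]

theorem monomial_mul_a (i j : ℕ) :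
    b K q ^ i * a K q ^ j * a K q = b K q ^ i * a K q ^ (j + 1) := by
  rw [mul_assoc, ← pow_succ]

theorem monomial_mul_b (i j : ℕ) :
    b K q ^ i * a K q ^ j * b K q = q ^ j • (b K q ^ (i + 1) * a K q ^ j) := by
  rw [mul_assoc, pow_a_mul_b, mul_smul_comm, ← mul_assoc, ← pow_succ]

theorem span_monomials :
    Submodule.span K (Set.range fun p : ℕ × ℕ => b K q ^ p.1 * a K q ^ p.2) = ⊤ := by
  rw [eq_top_iff, ← Algebra.top_toSubmodule, ← adjoin_a_b, Algebra.adjoin_eq_span,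
    Submodule.span_le]
  intro x hx
  obtain ⟨c, i, j, rfl⟩ : ∃ (c : K) (i j : ℕ), x = c • (b K q ^ i * a K q ^ j) := by
    induction hx using Submonoid.closure_induction_right with
    | one => exact ⟨1, 0, 0, by simp⟩
    | mul_right x _ y hy ih =>
      obtain ⟨c, i, j, rfl⟩ := ih
      rcases hy with rfl | rfl
      · exact ⟨c, i, j + 1, by rw [smul_mul_assoc, monomial_mul_a]⟩
      · exact ⟨c * q ^ j, i + 1, j, by rw [smul_mul_assoc, monomial_mul_b, smul_smul]⟩
  exact Submodule.smul_mem _ c (Submodule.subset_span ⟨(i, j), rfl⟩)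

def gradeA : QuantumPlane K q →ₐ[K] (QuantumPlane K q)[X] :=
  lift (C (a K q) * X) (C (b K q)) <| by
    rw [mul_assoc, X_mul_C, ← mul_assoc, ← C_mul, a_mul_b, ← mul_assoc, ← C_mul, ← smul_C,
      smul_mul_assoc]

theorem isRightRegular_a_sub_one : IsRightRegular (a K q - 1) := by
  have hinv : (evalOneAlgHom K _).comp gradeA = AlgHom.id K (QuantumPlane K q) := by
    apply algHom_ext <;> simp [gradeA, evalOneAlgHom]
  intro x y hxy
  have h : gradeA x * (C (a K q) * X - 1) = gradeA y * (C (a K q) * X - 1) := by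
    simpa [gradeA] using congrArg gradeA hxy
  simpa [← AlgHom.comp_apply, hinv] using
    congrArg (evalOneAlgHom K _) (isRightRegular_C_mul_X_sub_one _ h)

section weightRep

def weightLower (K : Type) [Field K] : Module.End K (ℤ →₀ K) :=
  Finsupp.lmapDomain K K (· - 1)

def weightRaise (q : K) : Module.End K (ℤ →₀ K) :=
  Finsupp.lsum K fun d => q ^ d • Finsupp.lsingle (d + 1)

@[simp]
theorem weightLower_single (d : ℤ) (k : K) :
    weightLower K (Finsupp.single d k) = Finsupp.single (d - 1) k :=
  Finsupp.mapDomain_single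

@[simp]
theorem weightRaise_single (d : ℤ) (k : K) :
    weightRaise q (Finsupp.single d k) = Finsupp.single (d + 1) (q ^ d * k) := by
  simp [weightRaise]

theorem weightLower_mul_weightRaise (hq0 : q ≠ 0) :
    weightLower K * weightRaise q = q • (weightRaise q * weightLower K) := by
  refine Finsupp.lhom_ext fun d k => ?_
  rw [Module.End.mul_apply, LinearMap.smul_apply, Module.End.mul_apply, weightRaise_single,
    weightLower_single, weightLower_single, weightRaise_single, add_sub_cancel_right,
    sub_add_cancel, Finsupp.smul_single, smul_eq_mul, zpow_sub_one₀ hq0]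
  field_simp

def weightRep (hq0 : q ≠ 0) : QuantumPlane K q →ₐ[K] Module.End K (ℤ →₀ K) :=
  lift (weightLower K) (weightRaise q) (weightLower_mul_weightRaise hq0)

variable (hq0 : q ≠ 0)

@[simp]
theorem weightRep_a : weightRep hq0 (a K q) = weightLower K := lift_a ..

@[simp]
theorem weightRep_b : weightRep hq0 (b K q) = weightRaise q := lift_b ..

theorem weightRep_a_pow_single (n : ℕ) (d : ℤ) (k : K) :
    weightRep hq0 (a K q ^ n) (Finsupp.single d k) = Finsupp.single (d - n) k := by
  induction n with
  | zero => simp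
  | succ n ih => rw [pow_succ', map_mul, Module.End.mul_apply, ih]; simp [sub_sub]

theorem exists_weightRep_b_pow_single (n : ℕ) (d : ℤ) :
    ∃ u : K, u ≠ 0 ∧ ∀ k, weightRep hq0 (b K q ^ n) (Finsupp.single d k) =
      Finsupp.single (d + n) (u * k) := by
  induction n with
  | zero => exact ⟨1, one_ne_zero, by simp⟩
  | succ n ih =>
    obtain ⟨u, hu, h⟩ := ih
    refine ⟨q ^ (d + n) * u, mul_ne_zero (zpow_ne_zero _ hq0) hu, fun k => ?_⟩
    rw [pow_succ', map_mul, Module.End.mul_apply, h, weightRep_b, weightRaise_single, Nat.cast_succ,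
      add_assoc, mul_assoc]

theorem weightRep_ab_single (d : ℤ) (k : K) :
    weightRep hq0 (a K q * b K q) (Finsupp.single d k) = Finsupp.single d (q ^ d * k) := by
  rw [map_mul, Module.End.mul_apply, weightRep_a, weightRep_b, weightRaise_single,
    weightLower_single, add_sub_cancel_right]

theorem weightRep_ab_apply (w : ℤ →₀ K) (e : ℤ) :
    weightRep hq0 (a K q * b K q) w e = q ^ e * w e := by
  induction w using Finsupp.induction_linear with
  | zero => simp
  | add v w hv hw => simp only [map_add, Finsupp.add_apply, hv, hw, mul_add]
  | single d k =>
    rw [weightRep_ab_single, Finsupp.single_apply, Finsupp.single_apply]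
    split_ifs with h <;> simp [h]

theorem weightRep_ab_sub_one : weightRep hq0 (a K q * b K q - 1) (Finsupp.single 0 1) = 0 := by
  rw [map_sub, LinearMap.sub_apply, weightRep_ab_single, map_one, Module.End.one_apply, zpow_zero,
    one_mul, sub_self]

theorem exists_weightRep_single_eq (d : ℤ) {k : K} (hk : k ≠ 0) :
    ∃ y, weightRep hq0 y (Finsupp.single d k) = Finsupp.single 0 1 := by
  obtain ⟨n, rfl | rfl⟩ := Int.eq_nat_or_neg d
  · refine ⟨k⁻¹ • a K q ^ n, ?_⟩
    rw [map_smul, LinearMap.smul_apply, weightRep_a_pow_single, sub_self, Finsupp.smul_single,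
      smul_eq_mul, inv_mul_cancel₀ hk]
  · obtain ⟨u, hu, h⟩ := exists_weightRep_b_pow_single hq0 n (-n)
    refine ⟨(u * k)⁻¹ • b K q ^ n, ?_⟩
    rw [map_smul, LinearMap.smul_apply, h, neg_add_cancel, Finsupp.smul_single, smul_eq_mul,
      inv_mul_cancel₀ (mul_ne_zero hu hk)]

theorem support_weightRep_ab_sub (hq : ∀ k : ℕ, 0 < k → q ^ k ≠ 1) (w : ℤ →₀ K) (d : ℤ) :
    (weightRep hq0 (a K q * b K q - algebraMap K _ (q ^ d)) w).support = w.support.erase d := by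
  ext e
  have hcoeff : weightRep hq0 (a K q * b K q - algebraMap K _ (q ^ d)) w e =
      (q ^ e - q ^ d) * w e := by
    rw [map_sub, AlgHom.commutes, LinearMap.sub_apply, Finsupp.sub_apply, weightRep_ab_apply,
      Module.algebraMap_end_apply, Finsupp.smul_apply, smul_eq_mul, sub_mul]
  rw [Finsupp.mem_support_iff, hcoeff, Finset.mem_erase, Finsupp.mem_support_iff, ne_eq,
    mul_eq_zero, sub_eq_zero, (zpow_injective_of_pow_ne_one hq0 hq).eq_iff]
  tauto

theorem exists_weightRep_eq_single_zero (hq : ∀ k : ℕ, 0 < k → q ^ k ≠ 1) {w : ℤ →₀ K}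
    (hw : w ≠ 0) : ∃ y, weightRep hq0 y w = Finsupp.single 0 1 := by
  induction h : w.support.card using Nat.strong_induction_on generalizing w with
  | _ n ih =>
    obtain ⟨d, hd⟩ := Finsupp.support_nonempty_iff.2 hw
    by_cases hn : n = 1
    · obtain ⟨e, he, hwe⟩ := Finsupp.card_support_eq_one.1 (h.trans hn)
      exact hwe ▸ exists_weightRep_single_eq hq0 e he
    set w' := weightRep hq0 (a K q * b K q - algebraMap K _ (q ^ d)) w
    have hcard : w'.support.card = n - 1 := by
      rw [support_weightRep_ab_sub hq0 hq, Finset.card_erase_of_mem hd, h]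
    have hpos : 0 < n := h ▸ Finset.card_pos.2 ⟨d, hd⟩
    have hw' : w' ≠ 0 := by
      rw [← Finsupp.support_nonempty_iff, ← Finset.card_pos, hcard]
      omega
    obtain ⟨y, hy⟩ := ih (n - 1) (by omega) hw' hcard
    exact ⟨y * (a K q * b K q - algebraMap K _ (q ^ d)), by rw [map_mul, Module.End.mul_apply, hy]⟩

end weightRep

section kernel

def weightMonomial (q : K) (d : ℤ) : QuantumPlane K q := b K q ^ d.toNat * a K q ^ (-d).toNat

theorem pow_mul_pow_mem_sup_span_weightMonomial (hq0 : q ≠ 0) (i j : ℕ) :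
    b K q ^ i * a K q ^ j ∈ (Ideal.span {a K q * b K q - 1}).restrictScalars K ⊔
      Submodule.span K (Set.range (weightMonomial q)) := by
  induction i generalizing j with
  | zero =>
    refine Submodule.mem_sup_right (Submodule.subset_span ⟨-j, ?_⟩)
    simp [weightMonomial]
  | succ i ih =>
    cases j with
    | zero =>
      refine Submodule.mem_sup_right (Submodule.subset_span ⟨(i + 1 : ℕ), ?_⟩)
      rw [weightMonomial, Int.toNat_natCast, show (-((i + 1 : ℕ) : ℤ)).toNat = 0 by omega]
    | succ j =>
      -- right multiplication by `ab` is the identity modulo `B(ab - 1)`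
      have hab : b K q ^ i * a K q ^ j * (a K q * b K q) =
          q ^ (j + 1) • (b K q ^ (i + 1) * a K q ^ (j + 1)) := by
        rw [← mul_assoc, monomial_mul_a, monomial_mul_b]
      have hmem : b K q ^ i * a K q ^ j * (a K q * b K q - 1) ∈
          Ideal.span {a K q * b K q - 1} :=
        Ideal.mul_mem_left _ _ (Ideal.subset_span rfl)
      have heq : b K q ^ (i + 1) * a K q ^ (j + 1) = (q ^ (j + 1))⁻¹ •
          (b K q ^ i * a K q ^ j + b K q ^ i * a K q ^ j * (a K q * b K q - 1)) := by
        rw [mul_sub, hab, mul_one, add_sub_cancel, smul_smul,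
          inv_mul_cancel₀ (pow_ne_zero _ hq0), one_smul]
      rw [heq]
      exact Submodule.smul_mem _ _ (Submodule.add_mem _ (ih j) (Submodule.mem_sup_left hmem))

theorem sup_span_weightMonomial_eq_top (hq0 : q ≠ 0) :
    (Ideal.span {a K q * b K q - 1}).restrictScalars K ⊔
      Submodule.span K (Set.range (weightMonomial q)) = ⊤ := by
  rw [eq_top_iff, ← span_monomials, Submodule.span_le]
  rintro _ ⟨⟨i, j⟩, rfl⟩
  exact pow_mul_pow_mem_sup_span_weightMonomial hq0 i j

theorem exists_weightRep_weightMonomial (hq0 : q ≠ 0) (d : ℤ) :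
    ∃ u : K, u ≠ 0 ∧
      weightRep hq0 (weightMonomial q d) (Finsupp.single 0 1) = Finsupp.single d u := by
  obtain ⟨u, hu, h⟩ := exists_weightRep_b_pow_single hq0 d.toNat (0 - (-d).toNat)
  refine ⟨u, hu, ?_⟩
  rw [weightMonomial, map_mul, Module.End.mul_apply, weightRep_a_pow_single, h, mul_one,
    zero_sub, neg_add_eq_sub, Int.toNat_sub_toNat_neg]

theorem eq_zero_of_mem_span_weightMonomial (hq0 : q ≠ 0) {s : QuantumPlane K q}
    (hs : s ∈ Submodule.span K (Set.range (weightMonomial q)))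
    (h : weightRep hq0 s (Finsupp.single 0 1) = 0) : s = 0 := by
  choose u hu hσ using exists_weightRep_weightMonomial hq0
  let ev : QuantumPlane K q →ₗ[K] ℤ →₀ K :=
    (LinearMap.applyₗ (Finsupp.single 0 1)).comp (weightRep hq0).toLinearMap
  have hli : LinearIndependent K (ev ∘ weightMonomial q) := by
    rw [show ev ∘ weightMonomial q = fun d => Finsupp.single d (u d) from funext hσ]
    exact Finsupp.linearIndependent_single_of_ne_zero hu
  rw [← Finsupp.range_linearCombination] at hs
  obtain ⟨c, rfl⟩ := hs
  have hc : c = 0 := hli (by rw [map_zero, ← Finsupp.apply_linearCombination]; exact h)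
  rw [hc, map_zero]

theorem mem_span_ab_sub_one_iff (hq0 : q ≠ 0) (x : QuantumPlane K q) :
    x ∈ Ideal.span {a K q * b K q - 1} ↔ weightRep hq0 x (Finsupp.single 0 1) = 0 := by
  constructor
  · intro hx
    obtain ⟨y, rfl⟩ := Ideal.mem_span_singleton'.1 hx
    rw [map_mul, Module.End.mul_apply, weightRep_ab_sub_one, map_zero]
  · intro hx
    have hmem : x ∈ (Ideal.span {a K q * b K q - 1}).restrictScalars K ⊔
        Submodule.span K (Set.range (weightMonomial q)) := by
      rw [sup_span_weightMonomial_eq_top hq0]; trivial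
    obtain ⟨i, hi, s, hs, rfl⟩ := Submodule.mem_sup.1 hmem
    obtain ⟨y, rfl⟩ := Ideal.mem_span_singleton'.1 hi
    have hs0 : s = 0 := eq_zero_of_mem_span_weightMonomial hq0 hs <| by
      rwa [map_add, LinearMap.add_apply, map_mul, Module.End.mul_apply, weightRep_ab_sub_one,
        map_zero, zero_add] at hx
    rw [hs0, add_zero]
    exact Ideal.mul_mem_left _ _ (Ideal.subset_span rfl)

theorem isCoatom_span_ab_sub_one (hq0 : q ≠ 0) (hq : ∀ k : ℕ, 0 < k → q ^ k ≠ 1) :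
    IsCoatom (Ideal.span {a K q * b K q - 1}) := by
  refine ⟨fun htop => ?_, fun J hJ => ?_⟩
  · have h := (mem_span_ab_sub_one_iff hq0 1).1 (htop ▸ Submodule.mem_top)
    simp at h
  obtain ⟨x, hxJ, hxI⟩ := SetLike.exists_of_lt hJ
  obtain ⟨y, hy⟩ :=
    exists_weightRep_eq_single_zero hq0 hq ((mem_span_ab_sub_one_iff hq0 x).not.1 hxI)
  have hyx : y * x - 1 ∈ J := hJ.le <| (mem_span_ab_sub_one_iff hq0 _).2 <| by
    rw [map_sub, map_mul, LinearMap.sub_apply, Module.End.mul_apply, hy, map_one,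
      Module.End.one_apply, sub_self]
  rw [Ideal.eq_top_iff_one]
  simpa using J.sub_mem (J.mul_mem_left y hxJ) hyx

end kernel

end QuantumPlane

/-- In the quantum plane `B = B(q)` with `q` not a root of unity, for the left ideals
`I = B(ab-1)(a-1) ⊆ J = B(a-1)`, the module `V = J/I` (realized as the image of `J` in
`B/I`) is a simple left `B`-module. -/
theorem quantumPlane_V_isSimple (K : Type) [Field K] (q : K) (hq0 : q ≠ 0)
    (hq : ∀ k : ℕ, 0 < k → q ^ k ≠ 1) :
    IsSimpleModule (QuantumPlane K q)
      (Submodule.map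
        (Ideal.span {(QuantumPlane.a K q * QuantumPlane.b K q - 1) *
          (QuantumPlane.a K q - 1)} : Ideal (QuantumPlane K q)).mkQ
        (Ideal.span {QuantumPlane.a K q - 1} : Ideal (QuantumPlane K q))) :=
  have := isSimpleModule_iff_isCoatom.2 (QuantumPlane.isCoatom_span_ab_sub_one hq0 hq)
  .congr <| Ideal.mapMkQSpanSingletonEquiv (QuantumPlane.isRightRegular_a_sub_one (q := q)) _

end
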